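/- Let K_{1,4} be the star with 4 leaves and let K be a CRG with only black vertices such that K_{1,4} does not map to K (i.e., there is no φ: V(K_{1,4}) → V(K) sending edges into {black, gray} edge colors or equal black vertices, and non-edges into {white, gray} colors or equal white vertices). Then every vertex of K is incident to at most two gray edges. -/

import Mathlib

open Finset

inductive EColor | white | black | gray
deriving DecidableEq

/-- The `p`-weight of an edge color: `p` for white, `1-p` for black, `0` for gray. -/
def wval (p : ℝ) : EColor → ℝ
  | .white => p
  | .black => 1 - p
  | .gray => 0

/-- The matrix `M_K(p)` of a CRG given by vertex colors `vb` (`true` = black)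
and edge colors `ec`. -/
def Mmat {V : Type*} [DecidableEq V] (vb : V → Bool) (ec : V → V → EColor) (p : ℝ)
    (x y : V) : ℝ :=
  if x = y then (if vb x then 1 - p else p) else wval p (ec x y)

/-- `μ` is a probability mass. -/
def IsProb {V : Type*} [Fintype V] (μ : V → ℝ) : Prop :=
  (∀ x, 0 ≤ μ x) ∧ ∑ x, μ x = 1

/-- The quadratic form `⟨μ, M_K(p) μ⟩`. -/
def QF {V : Type*} [Fintype V] [DecidableEq V] (vb : V → Bool) (ec : V → V → EColor)
    (p : ℝ) (μ : V → ℝ) : ℝ :=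
  ∑ x, ∑ y, μ x * Mmat vb ec p x y * μ y

/-- `g` is the minimum of the quadratic form over probability masses, i.e. `g = g_K(p)`. -/
def gIs {V : Type*} [Fintype V] [DecidableEq V] (vb : V → Bool) (ec : V → V → EColor)
    (p g : ℝ) : Prop :=
  IsLeast {t | ∃ μ : V → ℝ, IsProb μ ∧ t = QF vb ec p μ} g

/-- The weighted gray-degree `d_G(u) = ∑_{v : uv gray} μ(v)`. -/
def grayDeg {V : Type*} [Fintype V] [DecidableEq V] (ec : V → V → EColor) (μ : V → ℝ)
    (u : V) : ℝ :=
  ∑ v ∈ Finset.univ.filter (fun v => v ≠ u ∧ ec u v = EColor.gray), μ v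

/-- `F ↦ K`: a graph maps to a CRG. -/
def MapsToCRG {A V : Type*} (F : SimpleGraph A) (vb : V → Bool)
    (ec : V → V → EColor) : Prop :=
  ∃ φ : A → V,
    (∀ a b, F.Adj a b →
      (φ a = φ b ∧ vb (φ a) = true) ∨
      (φ a ≠ φ b ∧ (ec (φ a) (φ b) = EColor.black ∨ ec (φ a) (φ b) = EColor.gray))) ∧
    (∀ a b, a ≠ b → ¬ F.Adj a b →
      (φ a = φ b ∧ vb (φ a) = false) ∨
      (φ a ≠ φ b ∧ (ec (φ a) (φ b) = EColor.white ∨ ec (φ a) (φ b) = EColor.gray)))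

/-- The star `K_{1,4}` on `Fin 5`, with center `0`. -/
def star14 : SimpleGraph (Fin 5) := SimpleGraph.fromRel (fun a _ => a = 0)

lemma EColor.eq_white_or_gray_of_ne_black {e : EColor} (h : e ≠ .black) :
    e = .white ∨ e = .gray := by
  cases e <;> simp_all

lemma star14_adj_iff {i j : Fin 5} : star14.Adj i j ↔ i ≠ j ∧ (i = 0 ∨ j = 0) := by
  simp [star14, SimpleGraph.fromRel_adj]

/-- The centre and one leaf of `K_{1,4}` go to the black vertex `v`, the other three leaves to
three gray neighbours of `v`; the leaves then have pairwise distinct images, so in a 0-core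
CRG every non-edge among them lands on a white or gray edge. -/
lemma mapsToCRG_star14_of_three_gray {V : Type*} {vb : V → Bool} {ec : V → V → EColor}
    (hsymm : ∀ a b, ec a b = ec b a) (hnb : ∀ x y, x ≠ y → ec x y ≠ .black)
    {v a b c : V} (hv : vb v = true) (hab : a ≠ b) (hac : a ≠ c) (hbc : b ≠ c)
    (hav : a ≠ v) (hbv : b ≠ v) (hcv : c ≠ v)
    (hga : ec v a = .gray) (hgb : ec v b = .gray) (hgc : ec v c = .gray) :
    MapsToCRG star14 vb ec := by
  let φ : Fin 5 → V := ![v, a, b, c, v]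
  have hleaf : ∀ j ≠ 0, (φ 0 = φ j ∧ vb (φ 0) = true) ∨
      (φ 0 ≠ φ j ∧ (ec (φ 0) (φ j) = .black ∨ ec (φ 0) (φ j) = .gray)) := by
    intro j hj
    fin_cases j <;> simp [φ, hv, hga, hgb, hgc, hav.symm, hbv.symm, hcv.symm] at hj ⊢
  have hleaves_inj : ∀ i j, i ≠ 0 → j ≠ 0 → i ≠ j → φ i ≠ φ j := by
    intro i j hi hj hij
    fin_cases i <;> fin_cases j <;>
      simp [φ, hab, hac, hbc, hav, hbv, hcv, hab.symm, hac.symm, hbc.symm,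
        hav.symm, hbv.symm, hcv.symm] at hi hj hij ⊢
  refine ⟨φ, fun i j hadj => ?_, fun i j hij hnadj => ?_⟩
  · rcases star14_adj_iff.1 hadj with ⟨hne, rfl | rfl⟩
    · exact hleaf j hne.symm
    · rcases hleaf i hne with ⟨heq, hblack⟩ | ⟨hne', hcolor⟩
      · exact .inl ⟨heq.symm, heq ▸ hblack⟩
      · exact .inr ⟨hne'.symm, by rwa [hsymm]⟩
  · obtain ⟨hi, hj⟩ : i ≠ 0 ∧ j ≠ 0 := by simpa [star14_adj_iff, hij, not_or] using hnadj
    have hφ := hleaves_inj i j hi hj hij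
    exact .inr ⟨hφ, EColor.eq_white_or_gray_of_ne_black (hnb _ _ hφ)⟩

/-- if `K` is a CRG with only black vertices and only white or gray edges
(0-core), and `K_{1,4} ̸↦ K`, then every vertex of `K` is incident to at most two gray
edges. -/
theorem stmt15 {V : Type*} [Fintype V] [DecidableEq V]
    (vb : V → Bool) (ec : V → V → EColor) (hsymm : ∀ a b, ec a b = ec b a)
    (hblack : ∀ x, vb x = true)
    (hnb : ∀ x y, x ≠ y → ec x y ≠ EColor.black)
    (hstar : ¬ MapsToCRG star14 vb ec) :
    ∀ v, ((Finset.univ.filter fun u => u ≠ v ∧ ec v u = EColor.gray)).card ≤ 2 := by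
  intro v
  by_contra! hcard
  obtain ⟨a, ha, b, hb, c, hc, hab, hac, hbc⟩ := Finset.two_lt_card.1 hcard
  simp only [Finset.mem_filter] at ha hb hc
  exact hstar <| mapsToCRG_star14_of_three_gray hsymm hnb (hblack v) hab hac hbc
    ha.2.1 hb.2.1 hc.2.1 ha.2.2 hb.2.2 hc.2.2
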